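/- arXiv:1212.3813 — 4 statements merged into one kernel-verified Lean document; each statement's English description precedes it below -/
import Mathlib

section
/- Let S be a commutative ring of characteristic-0 mixed setting in which p is not a zero divisor, and suppose p^{1/p^{n-1}} ∈ S is an element whose p^{n-1}-st power is p. In the ring of Witt vectors W_n(S/pS) of length n, the ghost-component style map c_n : W_n(S/pS) → S/p^nS defined by c_n(s_0,…,s_{n-1}) = Σ_{i=0}^{n-1} p^i \tilde{s}_i^{p^{n-1-i}} (where \tilde{s}_i is any lift of s_i) is a well-defined ring homomorphism. -/
/-!
Every element of `W_n(S/pS)` is the truncation of the reduction of a Witt vector `x` over `S`,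
and `c_n` is induced by the ghost component `w_{n-1}(x) = Σ p^i x_i^{p^{n-1-i}}` read modulo
`p^n`. It is well defined because if `p ∣ x_i` for all `i < n`, then each term
`p^i x_i^{p^{n-1-i}}` is divisible by `p^(i + p^(n-1-i))` and `i + p^(n-1-i) ≥ n`; being
induced by a ring homomorphism, it is one.
-/

namespace WittVector

variable (p : ℕ) [Fact p.Prime] (n : ℕ) (S : Type*) [CommRing S]

local notation "modP" => Ideal.Quotient.mk (Ideal.span {(p : S)})

theorem ker_truncate_map_mk_le_ker_ghostComponent :
    RingHom.ker ((truncate (n + 1)).comp (map modP)) ≤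
      RingHom.ker ((Ideal.Quotient.mk (Ideal.span {(p : S) ^ (n + 1)})).comp
        (ghostComponent (p := p) n)) := by
  intro x hx
  have hcoeff : ∀ i ≤ n, (p : S) ∣ x.coeff i := fun i hi => by
    have := (mem_ker_truncate (n + 1) (map modP x)).mp hx i (Nat.lt_succ_of_le hi)
    rwa [map_coeff, Ideal.Quotient.eq_zero_iff_mem, Ideal.mem_span_singleton] at this
  rw [RingHom.mem_ker, RingHom.comp_apply, Ideal.Quotient.eq_zero_iff_mem,
    Ideal.mem_span_singleton]
  exact pow_dvd_ghostComponent_of_dvd_coeff hcoeff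

/-- The map `c_{n+1}` of the paper. -/
noncomputable def ghostComponentModPow :
    TruncatedWittVector p (n + 1) (S ⧸ Ideal.span {(p : S)}) →+*
      S ⧸ Ideal.span {(p : S) ^ (n + 1)} :=
  ((truncate (n + 1)).comp (map modP)).liftOfSurjective
    ((truncate_surjective p (n + 1) _).comp (map_surjective _ Ideal.Quotient.mk_surjective))
    ⟨_, ker_truncate_map_mk_le_ker_ghostComponent p n S⟩

variable {p n S}

theorem ghostComponentModPow_truncate_map (x : WittVector p S) :
    ghostComponentModPow p n S (truncate (n + 1) (map modP x)) =
      Ideal.Quotient.mk _ (ghostComponent n x) :=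
  RingHom.liftOfSurjective_comp_apply _ _ _ x

theorem ghostComponentModPow_mk (s : Fin (n + 1) → S) :
    ghostComponentModPow p n S (TruncatedWittVector.mk p fun i => modP (s i)) =
      Ideal.Quotient.mk _ (∑ i : Fin (n + 1), (p : S) ^ (i : ℕ) * s i ^ p ^ (n - i)) := by
  have hlift : TruncatedWittVector.mk p (fun i => modP (s i)) =
      truncate (n + 1) (map modP (WittVector.mk p fun i => s (Fin.ofNat (n + 1) i))) := by
    ext i
    simp
  rw [hlift, ghostComponentModPow_truncate_map, ghostComponent_apply, aeval_wittPolynomial,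
    ← Fin.sum_univ_eq_sum_range (fun i => (p : S) ^ i * _ ^ p ^ (n - i))]
  simp

end WittVector

theorem stmt_2_general (p : ℕ) [Fact p.Prime] (n : ℕ) (hn : 1 ≤ n)
    (S : Type*) [CommRing S] :
    ∃ c : TruncatedWittVector p n (S ⧸ Ideal.span {(p : S)}) →+*
        S ⧸ Ideal.span {(p : S) ^ n},
      ∀ s : Fin n → S,
        c (TruncatedWittVector.mk p fun i => Ideal.Quotient.mk _ (s i)) =
          Ideal.Quotient.mk _ (∑ i : Fin n, (p : S) ^ (i : ℕ) * s i ^ p ^ (n - 1 - (i : ℕ))) := by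
  obtain ⟨m, rfl⟩ := Nat.exists_eq_add_of_le' hn
  exact ⟨WittVector.ghostComponentModPow p m S, fun s => by
    simpa using WittVector.ghostComponentModPow_mk s⟩

/-- For a commutative ring `S` in which `p` is not a zero divisor, the map
`c_n : W_n(S/pS) → S/p^nS`, `(s_0, …, s_{n-1}) ↦ Σ p^i s̃_i^{p^{n-1-i}}`, is a well-defined
ring homomorphism. -/
theorem stmt_2 (p : ℕ) [Fact p.Prime] (n : ℕ) (hn : 1 ≤ n)
    (S : Type*) [CommRing S]
    (hp : ∀ x : S, (p : S) * x = 0 → x = 0) :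
    ∃ c : TruncatedWittVector p n (S ⧸ Ideal.span {(p : S)}) →+*
        S ⧸ Ideal.span {(p : S) ^ n},
      ∀ s : Fin n → S,
        c (TruncatedWittVector.mk p fun i => Ideal.Quotient.mk _ (s i)) =
          Ideal.Quotient.mk _ (∑ i : Fin n, (p : S) ^ (i : ℕ) * s i ^ p ^ (n - 1 - (i : ℕ))) :=
  stmt_2_general p n hn S
end

section
/- Let S be a normal domain containing a compatible system of p-power roots p^{1/p^m} of p, flat over Z_p. Then the element ξ_n := [p^{1/p^{n-1}}] − p of W_n(S/pS), where [·] denotes the Teichmüller lift, generates the kernel of the ring homomorphism c_n : W_n(S/pS) → S/p^nS given by c_n(s_0,…,s_{n-1}) = Σ_{i=0}^{n-1} p^i \tilde{s}_i^{p^{n-1-i}}. -/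
/-!
Lift an element of the kernel of `c_n` to `x ∈ W(S)`; lying in the kernel says
`p ^ n ∣ w_{n-1}(x)`. Multiples of `ξ` are then peeled off one Witt coordinate at a time.
If `p ^ (m+1) ∣ w_m(x)`, then `p ∣ x₀ ^ p ^ m` and `p = r_m ^ p ^ m`, so normality gives
`x₀ = r_m t`. The correction `u = x - [t]([r_m] - p)` has the same `w_m` and `p ∣ u₀`, so
modulo `p` it is `V y`, and `p`-torsion-freeness of `S` gives `p ^ m ∣ w_{m-1}(y)`.
By induction `y ≡ z ξ_m + w`, and `V(z · F ξ_{m+1}) = V z · ξ_{m+1}` with `F ξ_{m+1} = ξ_m`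
returns the correction to a multiple of `ξ_{m+1}`.
-/

open WittVector

namespace WittVector

variable {p : ℕ} [Fact p.Prime] {R : Type*} [CommRing R]

theorem ghostComponent_eq_sum (k : ℕ) (x : WittVector p R) :
    ghostComponent k x = ∑ i ∈ Finset.range (k + 1), (p : R) ^ i * x.coeff i ^ p ^ (k - i) := by
  simp [ghostComponent_apply, wittPolynomial_eq_sum_C_mul_X_pow, map_sum]

theorem ghostComponent_zero (x : WittVector p R) : ghostComponent 0 x = x.coeff 0 := by
  simp [ghostComponent_eq_sum]

theorem dvd_ghostComponent_sub_coeff_zero_pow (k : ℕ) (x : WittVector p R) :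
    (p : R) ∣ ghostComponent k x - x.coeff 0 ^ p ^ k := by
  rw [ghostComponent_eq_sum, Finset.sum_range_succ', pow_zero, one_mul, Nat.sub_zero,
    add_sub_cancel_right]
  exact Finset.dvd_sum fun i _ => (dvd_pow_self _ i.succ_ne_zero).mul_right _

theorem pow_succ_dvd_ghostComponent_sub {x y : WittVector p R}
    (h : ∀ i, (p : R) ∣ x.coeff i - y.coeff i) (k : ℕ) :
    (p : R) ^ (k + 1) ∣ ghostComponent k x - ghostComponent k y := by
  rw [ghostComponent_eq_sum, ghostComponent_eq_sum, ← Finset.sum_sub_distrib]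
  refine Finset.dvd_sum fun i hi => ?_
  have hik : i + (k - i + 1) = k + 1 := by have := Finset.mem_range.mp hi; omega
  rw [← mul_sub, ← hik, pow_add]
  exact mul_dvd_mul_left _ (dvd_sub_pow_of_dvd_sub (h i) (k - i))

theorem pow_succ_dvd_ghostComponent_sub_verschiebung_shift {x : WittVector p R}
    (h : (p : R) ∣ x.coeff 0) (k : ℕ) :
    (p : R) ^ (k + 1) ∣ ghostComponent k x - ghostComponent k (verschiebung (x.shift 1)) := by
  refine pow_succ_dvd_ghostComponent_sub (fun i => ?_) k
  cases i with
  | zero => simpa [verschiebung_coeff_zero] using h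
  | succ i => simp [verschiebung_coeff_succ, shift_coeff, add_comm]

theorem map_eq_verschiebung_map_shift {T : Type*} [CommRing T] (f : R →+* T) {x : WittVector p R}
    (h : f (x.coeff 0) = 0) : map f x = verschiebung (map f (x.shift 1)) := by
  ext i
  cases i with
  | zero => simpa [verschiebung_coeff_zero] using h
  | succ i => simp [verschiebung_coeff_succ, shift_coeff, add_comm]

theorem frobenius_teichmuller_of_charP [CharP R p] (a : R) :
    frobenius (teichmuller p a) = teichmuller p (a ^ p) := by
  rw [frobenius_eq_map_frobenius, map_teichmuller, frobenius_def]

theorem truncate_teichmuller (n : ℕ) (a : R) :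
    truncate n (teichmuller p a) =
      TruncatedWittVector.mk p (fun i => if (i : ℕ) = 0 then a else 0) := by
  ext i
  rw [coeff_truncate, TruncatedWittVector.coeff_mk]
  split_ifs with hi
  · rw [hi, teichmuller_coeff_zero]
  · exact teichmuller_coeff_pos _ _ _ (Nat.pos_of_ne_zero hi)

theorem truncate_eq_zero_of_coeff {n : ℕ} {x : WittVector p R} (h : ∀ i < n, x.coeff i = 0) :
    truncate n x = 0 := by
  ext i
  rw [coeff_truncate, h i i.2, TruncatedWittVector.coeff_zero]

theorem apply_truncate_map_eq_ghostComponent {S T : Type*} [CommRing S] [CommRing T] {n : ℕ}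
    (hn : 1 ≤ n) (π : S →+* R) (f : S →+* T) (c : TruncatedWittVector p n R →+* T)
    (hc : ∀ s : Fin n → S, c (TruncatedWittVector.mk p fun i => π (s i)) =
      f (∑ i : Fin n, (p : S) ^ (i : ℕ) * s i ^ p ^ (n - 1 - (i : ℕ)))) (x : WittVector p S) :
    c (truncate n (map π x)) = f (ghostComponent (n - 1) x) := by
  have htrunc : truncate n (map π x) = TruncatedWittVector.mk p fun i => π (x.coeff i) := by
    ext i
    rw [coeff_truncate, map_coeff, TruncatedWittVector.coeff_mk]
  rw [htrunc, hc, ghostComponent_eq_sum, Nat.sub_add_cancel hn, Finset.sum_range]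

end WittVector

theorem pow_pow_eq_of_pow_succ_eq {M : Type*} [Monoid M] {p : ℕ} {r : ℕ → M}
    (hr : ∀ m, r (m + 1) ^ p = r m) (m : ℕ) : r m ^ p ^ m = r 0 := by
  induction m with
  | zero => simp
  | succ k ih => rw [pow_succ, pow_mul', hr, ih]

section CompatibleRoots

/-- `xi p r m` is the paper's `ξ_{m+1}`, read modulo `p` from its lift `[r m] - p` to `W(S)`. -/
noncomputable def xi (p : ℕ) [Fact p.Prime] {S : Type*} [CommRing S] (r : ℕ → S) (m : ℕ) :
    WittVector p (S ⧸ Ideal.span {(p : S)}) :=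
  map (Ideal.Quotient.mk _) (teichmuller p (r m) - p)

variable {p : ℕ} [Fact p.Prime] {S : Type*} [CommRing S] {r : ℕ → S}

theorem ghostComponent_teichmuller_sub_eq_zero (hr0 : r 0 = p) (hr : ∀ m, r (m + 1) ^ p = r m)
    (m : ℕ) : ghostComponent m (teichmuller p (r m) - p : WittVector p S) = 0 := by
  rw [map_sub, ghostComponent_teichmuller, map_natCast, pow_pow_eq_of_pow_succ_eq hr, hr0, sub_self]

theorem frobenius_xi_succ (hr : ∀ m, r (m + 1) ^ p = r m) (m : ℕ) :
    frobenius (xi p r (m + 1)) = xi p r m := by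
  by_cases hunit : IsUnit (p : S)
  · have : Subsingleton (S ⧸ Ideal.span {(p : S)}) :=
      Ideal.Quotient.subsingleton_iff.mpr (Ideal.span_singleton_eq_top.mpr hunit)
    ext i
    exact Subsingleton.elim _ _
  · have := CharP.quotient S p hunit
    rw [xi, xi, map_sub, map_sub, map_sub, map_natCast, map_natCast, map_teichmuller,
      map_teichmuller, frobenius_teichmuller_of_charP, ← map_pow, hr]

variable [IsDomain S] [IsIntegrallyClosed S]

theorem exists_map_eq_teichmuller_mul_xi_add_verschiebung (hr0 : r 0 = p)
    (hr : ∀ m, r (m + 1) ^ p = r m) {m : ℕ} {x : WittVector p S}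
    (hx : (p : S) ^ (m + 1) ∣ ghostComponent m x) :
    ∃ t y, map (Ideal.Quotient.mk _) x =
        teichmuller p (Ideal.Quotient.mk _ t) * xi p r m +
          verschiebung (map (Ideal.Quotient.mk _) y) ∧
      (p : S) ^ (m + 1) ∣ ghostComponent m (verschiebung y) := by
  have hp : p ≠ 0 := (Fact.out : p.Prime).ne_zero
  obtain ⟨t, ht⟩ : r m ∣ x.coeff 0 := by
    rw [← IsIntegrallyClosed.pow_dvd_pow_iff (pow_ne_zero m hp), pow_pow_eq_of_pow_succ_eq hr,
      hr0]
    exact (dvd_sub_right ((dvd_pow_self _ m.succ_ne_zero).trans hx)).mp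
      (dvd_ghostComponent_sub_coeff_zero_pow m x)
  set u := x - teichmuller p t * (teichmuller p (r m) - p)
  have hu0 : u.coeff 0 = p * t := by
    rw [← ghostComponent_zero, map_sub, map_mul, map_sub, ghostComponent_teichmuller,
      ghostComponent_teichmuller, ghostComponent_zero, ht, map_natCast]
    ring
  have hu : ghostComponent m u = ghostComponent m x := by
    rw [map_sub, map_mul, ghostComponent_teichmuller_sub_eq_zero hr0 hr, mul_zero, sub_zero]
  refine ⟨t, u.shift 1, ?_, ?_⟩
  · have hmk : Ideal.Quotient.mk (Ideal.span {(p : S)}) (u.coeff 0) = 0 := by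
      rw [hu0, Ideal.Quotient.eq_zero_iff_mem]
      exact Ideal.mul_mem_right _ _ (Ideal.mem_span_singleton_self _)
    rw [← map_eq_verschiebung_map_shift _ hmk, ← sub_add_cancel x u, map_add, sub_sub_cancel,
      map_mul, map_teichmuller, xi]
  · exact (dvd_sub_right (hu ▸ hx)).mp
      (pow_succ_dvd_ghostComponent_sub_verschiebung_shift ⟨t, hu0⟩ m)

theorem exists_map_eq_mul_xi_add_of_pow_dvd_ghostComponent (hp0 : (p : S) ≠ 0) (hr0 : r 0 = p)
    (hr : ∀ m, r (m + 1) ^ p = r m) (m : ℕ) {x : WittVector p S}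
    (hx : (p : S) ^ (m + 1) ∣ ghostComponent m x) :
    ∃ z w, map (Ideal.Quotient.mk _) x = z * xi p r m + w ∧ ∀ i ≤ m, w.coeff i = 0 := by
  induction m generalizing x with
  | zero =>
    obtain ⟨t, y, hxy, -⟩ := exists_map_eq_teichmuller_mul_xi_add_verschiebung hr0 hr hx
    refine ⟨_, _, hxy, fun i hi => ?_⟩
    rw [Nat.le_zero.mp hi, verschiebung_coeff_zero]
  | succ m ih =>
    obtain ⟨t, y, hxy, hy⟩ := exists_map_eq_teichmuller_mul_xi_add_verschiebung hr0 hr hx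
    rw [ghostComponent_verschiebung, pow_succ', mul_dvd_mul_iff_left hp0] at hy
    obtain ⟨z, w, hyzw, hw⟩ := ih hy
    refine ⟨teichmuller p (Ideal.Quotient.mk _ t) + verschiebung z, verschiebung w, ?_,
      fun i hi => ?_⟩
    · rw [hxy, hyzw, ← frobenius_xi_succ hr m, map_add, verschiebung_mul_frobenius]
      ring
    · cases i with
      | zero => exact verschiebung_coeff_zero w
      | succ i => rw [verschiebung_coeff_succ, hw i (by omega)]

end CompatibleRoots

/-- If `S` is a normal domain, flat over `ℤ_p`, containing a compatible system
`r m` of `p`-power roots of `p` (`r 0 = p`, `(r (m+1))^p = r m`), then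
`ξ_n := [r (n-1)] − p` generates the kernel of the homomorphism
`c_n : W_n(S/pS) → S/p^nS`, `(s_0,…,s_{n-1}) ↦ Σ p^i s̃_i^{p^{n-1-i}}`. -/
theorem stmt_3 (p : ℕ) [Fact p.Prime] (n : ℕ) (hn : 1 ≤ n)
    (S : Type*) [CommRing S] [IsDomain S] [IsIntegrallyClosed S]
    (hp : ∀ x : S, (p : S) * x = 0 → x = 0)
    (r : ℕ → S) (hr0 : r 0 = (p : S)) (hr : ∀ m, r (m + 1) ^ p = r m)
    (c : TruncatedWittVector p n (S ⧸ Ideal.span {(p : S)}) →+*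
        S ⧸ Ideal.span {(p : S) ^ n})
    (hc : ∀ s : Fin n → S,
      c (TruncatedWittVector.mk p fun i => Ideal.Quotient.mk _ (s i)) =
        Ideal.Quotient.mk _ (∑ i : Fin n, (p : S) ^ (i : ℕ) * s i ^ p ^ (n - 1 - (i : ℕ)))) :
    RingHom.ker c = Ideal.span
      {TruncatedWittVector.mk p
          (fun i => if (i : ℕ) = 0 then Ideal.Quotient.mk _ (r (n - 1)) else 0) -
        (p : TruncatedWittVector p n (S ⧸ Ideal.span {(p : S)}))} := by
  have hp0 : (p : S) ≠ 0 := fun h => one_ne_zero (hp 1 (by rw [h, zero_mul]))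
  have hcx := apply_truncate_map_eq_ghostComponent hn _ _ c hc
  have hξ : truncate n (xi p r (n - 1)) = TruncatedWittVector.mk p
      (fun i => if (i : ℕ) = 0 then Ideal.Quotient.mk _ (r (n - 1)) else 0) -
        (p : TruncatedWittVector p n (S ⧸ Ideal.span {(p : S)})) := by
    rw [xi, map_sub, map_teichmuller, map_natCast, map_sub, truncate_teichmuller, map_natCast]
  rw [← hξ]
  refine le_antisymm (fun ζ hζ => ?_) ?_
  · obtain ⟨x, rfl⟩ : ∃ x, truncate n (map (Ideal.Quotient.mk _) x) = ζ :=
      (truncate_surjective p n _).comp (map_surjective _ Ideal.Quotient.mk_surjective) ζ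
    rw [RingHom.mem_ker, hcx, Ideal.Quotient.eq_zero_iff_mem, Ideal.mem_span_singleton,
      ← Nat.sub_add_cancel hn] at hζ
    obtain ⟨z, w, hxzw, hw⟩ :=
      exists_map_eq_mul_xi_add_of_pow_dvd_ghostComponent hp0 hr0 hr _ hζ
    rw [hxzw, map_add, truncate_eq_zero_of_coeff fun i hi => hw i (by omega), add_zero, map_mul,
      mul_comm]
    exact Ideal.mul_mem_right _ _ (Ideal.mem_span_singleton_self _)
  · rw [Ideal.span_le, Set.singleton_subset_iff, SetLike.mem_coe, RingHom.mem_ker, xi, hcx,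
      ghostComponent_teichmuller_sub_eq_zero hr0 hr, map_zero]
end

section
/- Let R be a perfect F_p-algebra and let x ∈ R. The kernel of the ring homomorphism W_n(R) → W_n(R/xR) induced by the quotient map is the ideal generated by {[x], V([x]), V^2([x]), …, V^{n-1}([x])}, where [x] is the Teichmüller lift and V the Verschiebung. -/
open WittVector Function Finset

section aux

variable {p : ℕ} [hp : Fact p.Prime] {R : Type*} [CommRing R]

private theorem aux_coeff_zero_ghost (w : WittVector p R) :
    WittVector.ghostComponent 0 w = w.coeff 0 := by
  rw [WittVector.ghostComponent_apply, wittPolynomial_zero, MvPolynomial.aeval_X]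

private theorem aux_exists_verschiebung (w : WittVector p R) (h : w.coeff 0 = 0) :
    ∃ u, WittVector.verschiebung u = w := by
  refine ⟨WittVector.mk p (fun i => w.coeff (i + 1)), ?_⟩
  ext i
  cases i with
  | zero => rw [WittVector.verschiebung_coeff_zero, h]
  | succ i => rw [WittVector.verschiebung_coeff_succ, WittVector.coeff_mk]

private theorem aux_iterate_verschiebung_coeff_lt (r : WittVector p R) :
    ∀ m i, i < m → ((WittVector.verschiebung (p := p) (R := R))^[m] r).coeff i = 0 := by
  intro m
  induction m with
  | zero => intro i hi; omega
  | succ m ih =>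
    intro i hi
    rw [Function.iterate_succ_apply']
    cases i with
    | zero => rw [WittVector.verschiebung_coeff_zero]
    | succ i => rw [WittVector.verschiebung_coeff_succ]; exact ih i (by omega)

private theorem aux_map_iterate_verschiebung {S : Type*} [CommRing S] (f : R →+* S)
    (m : ℕ) (w : WittVector p R) :
    WittVector.map f ((WittVector.verschiebung (p := p))^[m] w)
      = (WittVector.verschiebung (p := p))^[m] (WittVector.map f w) := by
  induction m with
  | zero => rfl
  | succ m ih =>
    rw [Function.iterate_succ_apply', Function.iterate_succ_apply',
      WittVector.map_verschiebung, ih]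

private theorem aux_key [CharP R p] [PerfectRing R p] (x : R) :
    ∀ (n : ℕ) (w : WittVector p R),
      (∀ i < n,
        (WittVector.map (Ideal.Quotient.mk (Ideal.span {x})) w).coeff i = 0) →
      ∃ (t : ℕ → WittVector p R) (r : WittVector p R),
        w = (∑ i ∈ Finset.range n,
              (WittVector.verschiebung (p := p))^[i] (WittVector.teichmuller p x) * t i)
            + (WittVector.verschiebung (p := p))^[n] r := by
  intro n
  induction n with
  | zero => intro w _; exact ⟨fun _ => 0, w, by simp⟩
  | succ n ih =>
    intro w hw
    set π := Ideal.Quotient.mk (Ideal.span {x}) with hπ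
    have hx0 : π x = 0 := Ideal.Quotient.eq_zero_iff_mem.mpr (Ideal.subset_span rfl)
    have h0 : w.coeff 0 ∈ Ideal.span {x} := by
      rw [← Ideal.Quotient.eq_zero_iff_mem]
      have := hw 0 (Nat.succ_pos n)
      rwa [WittVector.map_coeff] at this
    obtain ⟨s, hs⟩ := (Ideal.mem_span_singleton).mp h0
    set u := w - WittVector.teichmuller p (x * s) with hu
    have hmapu : WittVector.map π u = WittVector.map π w := by
      rw [hu, map_sub, WittVector.map_teichmuller, map_mul, hx0, zero_mul,
        WittVector.teichmuller_zero, sub_zero]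
    have hu0 : u.coeff 0 = 0 := by
      have : WittVector.ghostComponent 0 u = 0 := by
        rw [hu, map_sub, aux_coeff_zero_ghost, aux_coeff_zero_ghost,
          WittVector.teichmuller_coeff_zero, hs, sub_self]
      rwa [aux_coeff_zero_ghost] at this
    obtain ⟨u', hu'⟩ := aux_exists_verschiebung u hu0
    have hu'c : ∀ i < n, (WittVector.map π u').coeff i = 0 := by
      intro i hi
      have : (WittVector.map π u).coeff (i + 1) = 0 := by
        rw [hmapu]; exact hw (i + 1) (by omega)
      rwa [← hu', WittVector.map_verschiebung, WittVector.verschiebung_coeff_succ] at this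
    obtain ⟨t, r, hr⟩ := ih u' hu'c
    choose t' ht' using fun i => (WittVector.frobenius_bijective p R).surjective (t i)
    refine ⟨fun i => Nat.casesOn i (WittVector.teichmuller p s) t', r, ?_⟩
    have hw' : w = WittVector.verschiebung u' + WittVector.teichmuller p (x * s) := by
      rw [hu'] ; rw [hu]; ring
    rw [hw', hr, map_add, map_sum, Finset.sum_range_succ']
    have hterm : ∀ i, WittVector.verschiebung
          ((WittVector.verschiebung (p := p))^[i] (WittVector.teichmuller p x) * t i)
        = (WittVector.verschiebung (p := p))^[i + 1] (WittVector.teichmuller p x) * t' i := by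
      intro i
      rw [← ht', WittVector.verschiebung_mul_frobenius, Function.iterate_succ_apply']
    simp only [hterm]
    rw [Function.iterate_succ_apply']
    have hNat : (Nat.rec (motive := fun _ => WittVector p R)
        (WittVector.teichmuller p s) (fun n _ => t' n) 0) = WittVector.teichmuller p s := rfl
    rw [hNat, Function.iterate_zero_apply, ← map_mul]
    ring

end aux

/-- Let `R` be a perfect ring of characteristic `p` and `x ∈ R`.  The kernel of
the homomorphism `W_n(R) → W_n(R/xR)` induced by the quotient map (i.e. of any ring homomorphism
`φ` compatible with `W(R) → W(R/xR)` via truncation) is the ideal generated by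
`[x], V[x], V²[x], …, V^{n-1}[x]`. -/
theorem stmt_6 (p : ℕ) [Fact p.Prime] (n : ℕ)
    (R : Type*) [CommRing R] [CharP R p] [PerfectRing R p] (x : R)
    (φ : TruncatedWittVector p n R →+*
      TruncatedWittVector p n (R ⧸ Ideal.span {x}))
    (hφ : φ.comp (WittVector.truncate n) =
      (WittVector.truncate n).comp (WittVector.map (Ideal.Quotient.mk (Ideal.span {x})))) :
    RingHom.ker φ = Ideal.span
      ((fun i : ℕ => WittVector.truncate n
          ((fun w : WittVector p R => WittVector.verschiebung w)^[i]
            (WittVector.teichmuller p x))) '' Set.Iio n) := by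
  set π := Ideal.Quotient.mk (Ideal.span {x}) with hπ
  have hx0 : π x = 0 := Ideal.Quotient.eq_zero_iff_mem.mpr (Ideal.subset_span rfl)
  have hφ' : ∀ w : WittVector p R,
      φ (WittVector.truncate n w) = WittVector.truncate n (WittVector.map π w) :=
    fun w => RingHom.congr_fun hφ w
  apply le_antisymm
  · -- ker ⊆ span
    intro y hy
    obtain ⟨w, rfl⟩ := WittVector.truncate_surjective (p := p) n R y
    have hker : ∀ i < n, (WittVector.map π w).coeff i = 0 := by
      rw [← WittVector.mem_ker_truncate]
      rw [RingHom.mem_ker] at hy ⊢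
      rw [← hφ' w]; exact hy
    obtain ⟨t, r, hr⟩ := aux_key x n w hker
    rw [hr, map_add, map_sum]
    have h0 : WittVector.truncate (p := p) n ((WittVector.verschiebung (p := p))^[n] r) = 0 := by
      rw [← RingHom.mem_ker, WittVector.mem_ker_truncate]
      exact fun i hi => aux_iterate_verschiebung_coeff_lt r n i hi
    rw [h0, add_zero]
    apply Ideal.sum_mem
    intro i hi
    rw [map_mul]
    exact Ideal.mul_mem_right _ _ (Ideal.subset_span ⟨i, Finset.mem_range.mp hi, rfl⟩)
  · -- span ⊆ ker
    rw [Ideal.span_le]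
    rintro _ ⟨i, hi, rfl⟩
    simp only [SetLike.mem_coe, RingHom.mem_ker]
    rw [hφ']
    rw [aux_map_iterate_verschiebung, WittVector.map_teichmuller, hx0,
      WittVector.teichmuller_zero]
    simp
end

section
/- Let A be a ring with a descending filtration Fil^• and let t ∈ Fil¹A be such that multiplication by t is injective and shifts the filtration: t·Fil^r ⊂ Fil^{r+1} with Fil^{r+1} ∩ tA = t·Fil^r. Define B := A[1/t] with Fil^r B := ∪_{n≥0} t^{−n} Fil^{r+n} A. Then Fil^• B is a decreasing, exhaustive filtration on B, multiplication by t induces an isomorphism Fil^r B → Fil^{r+1} B, and Fil^r B ∩ A = Fil^r A for all r ≥ 0. -/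
/-!
Everything reduces to the strictness `Fil (r + 1) ∩ tA = t · Fil r`, which says that `t * a`
lies in `Fil (r + 1)` exactly when `a` lies in `Fil r`. Iterating, `t ^ n * a ∈ Fil (r + n)`
forces `a ∈ Fil r`, which gives `Fil^r B ∩ A = Fil^r A`; the other assertions are bookkeeping
with the representation `x = t^{-n} a` of elements of `B = A[1/t]`.
-/

section StrictShift

variable {A : Type*} [CommRing A] {Fil : ℤ → Ideal A} {t : A}

theorem mul_mem_of_inf_span_eq {r : ℤ}
    (hstrict : Fil (r + 1) ⊓ Ideal.span {t} = Ideal.span {t} * Fil r)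
    {a : A} (ha : a ∈ Fil r) : t * a ∈ Fil (r + 1) := by
  have hmem : t * a ∈ Ideal.span {t} * Fil r :=
    Ideal.mul_mem_mul (Ideal.mem_span_singleton_self t) ha
  rw [← hstrict] at hmem
  exact hmem.1

theorem mem_of_mul_mem_of_inf_span_eq (ht : IsLeftRegular t) {r : ℤ}
    (hstrict : Fil (r + 1) ⊓ Ideal.span {t} = Ideal.span {t} * Fil r)
    {a : A} (ha : t * a ∈ Fil (r + 1)) : a ∈ Fil r := by
  have hmem : t * a ∈ Ideal.span {t} * Fil r := by
    rw [← hstrict]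
    exact ⟨ha, Ideal.mem_span_singleton.mpr ⟨a, rfl⟩⟩
  obtain ⟨c, hc, htc⟩ := Ideal.mem_span_singleton_mul.mp hmem
  rwa [ht htc] at hc

theorem mem_of_pow_mul_mem_of_inf_span_eq (ht : IsLeftRegular t)
    (hstrict : ∀ r : ℤ, Fil (r + 1) ⊓ Ideal.span {t} = Ideal.span {t} * Fil r)
    (n : ℕ) {r : ℤ} {a : A} (ha : t ^ n * a ∈ Fil (r + n)) : a ∈ Fil r := by
  induction n generalizing a with
  | zero => simpa using ha
  | succ n ih =>
    refine ih (mem_of_mul_mem_of_inf_span_eq ht (hstrict _) ?_)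
    rw [← mul_assoc, ← pow_succ']
    convert ha using 2
    push_cast
    ring

end StrictShift

section AwayFiltration

variable {A : Type*} [CommRing A] (Fil : ℤ → Ideal A) (t : A)
  (B : Type*) [CommRing B] [Algebra A B]

/-- `Fil^r B = ⋃ₙ t⁻ⁿ Fil^{r+n} A`, phrased without inverting `t`. -/
def awayFil (r : ℤ) : Set B :=
  {x : B | ∃ n : ℕ, ∃ a : A, a ∈ Fil (r + n) ∧ algebraMap A B a = algebraMap A B t ^ n * x}

variable {Fil t B}

theorem awayFil_succ_subset (hanti : ∀ r : ℤ, Fil (r + 1) ≤ Fil r) (r : ℤ) :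
    awayFil Fil t B (r + 1) ⊆ awayFil Fil t B r := by
  rintro x ⟨n, a, ha, hax⟩
  refine ⟨n, a, hanti (r + n) ?_, hax⟩
  rwa [add_right_comm]

theorem exists_mem_awayFil [IsLocalization.Away t B] (hFil0 : ∀ r : ℤ, r ≤ 0 → Fil r = ⊤)
    (x : B) : ∃ r : ℤ, x ∈ awayFil Fil t B r := by
  obtain ⟨n, a, hxa⟩ := IsLocalization.Away.surj t x
  refine ⟨-n, n, a, ?_, by rw [← hxa, mul_comm]⟩
  rw [neg_add_cancel, hFil0 0 le_rfl]
  exact Submodule.mem_top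

theorem image_mul_awayFil (hu : IsUnit (algebraMap A B t))
    (hstrict : ∀ r : ℤ, Fil (r + 1) ⊓ Ideal.span {t} = Ideal.span {t} * Fil r) (r : ℤ) :
    (fun x : B => algebraMap A B t * x) '' awayFil Fil t B r = awayFil Fil t B (r + 1) := by
  ext y
  constructor
  · rintro ⟨x, ⟨n, a, ha, hax⟩, rfl⟩
    refine ⟨n, t * a, ?_, by rw [map_mul, hax]; ring⟩
    rw [add_right_comm]
    exact mul_mem_of_inf_span_eq (hstrict _) ha
  · rintro ⟨n, a, ha, hay⟩
    refine ⟨hu.unit⁻¹ * y, ⟨n + 1, a, ?_, ?_⟩, hu.unit.mul_inv_cancel_left y⟩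
    · convert ha using 2
      push_cast
      ring
    · rw [hay, pow_succ, mul_assoc]
      exact congrArg _ (hu.unit.mul_inv_cancel_left y).symm

theorem algebraMap_mem_awayFil_iff (hinj : Function.Injective (algebraMap A B))
    (ht : IsLeftRegular t)
    (hstrict : ∀ r : ℤ, Fil (r + 1) ⊓ Ideal.span {t} = Ideal.span {t} * Fil r) (r : ℤ) (a : A) :
    algebraMap A B a ∈ awayFil Fil t B r ↔ a ∈ Fil r := by
  constructor
  · rintro ⟨n, b, hb, hba⟩
    rw [← map_pow, ← map_mul] at hba
    rw [hinj hba] at hb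
    exact mem_of_pow_mul_mem_of_inf_span_eq ht hstrict n hb
  · intro ha
    exact ⟨0, a, by simpa using ha, by simp⟩

end AwayFiltration

theorem stmt_17_general (A : Type*) [CommRing A]
    (Fil : ℤ → Ideal A) (hFil0 : ∀ r : ℤ, r ≤ 0 → Fil r = ⊤)
    (hanti : ∀ r : ℤ, Fil (r + 1) ≤ Fil r)
    (t : A)
    (hreg : ∀ a b : A, t * a = t * b → a = b)
    (hstrict : ∀ r : ℤ, Fil (r + 1) ⊓ Ideal.span {t} = Ideal.span {t} * Fil r)
    (B : Type*) [CommRing B] [Algebra A B] [IsLocalization.Away t B]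
    (FilB : ℤ → Set B)
    (hFilB : ∀ r : ℤ, FilB r = {x : B | ∃ n : ℕ, ∃ a : A,
      a ∈ Fil (r + n) ∧ algebraMap A B a = algebraMap A B t ^ n * x}) :
    (∀ r : ℤ, FilB (r + 1) ⊆ FilB r) ∧
    (∀ x : B, ∃ r : ℤ, x ∈ FilB r) ∧
    (∀ r : ℤ, (fun x : B => algebraMap A B t * x) '' FilB r = FilB (r + 1)) ∧
    (∀ r : ℤ, 0 ≤ r → {a : A | algebraMap A B a ∈ FilB r} = ↑(Fil r)) := by
  obtain rfl : FilB = awayFil Fil t B := funext hFilB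
  have ht : IsLeftRegular t := fun a b hab => hreg a b hab
  have hinj : Function.Injective (algebraMap A B) :=
    IsLocalization.injectiveₛ B (M := Submonoid.powers t) fun _ ⟨n, hn⟩ =>
      hn ▸ (isLeftRegular_iff_isRegular.mp ht).pow n
  refine ⟨awayFil_succ_subset hanti, exists_mem_awayFil hFil0,
    image_mul_awayFil (IsLocalization.Away.algebraMap_isUnit t) hstrict, fun r _ => ?_⟩
  ext a
  exact algebraMap_mem_awayFil_iff hinj ht hstrict r a

/-- Let `A` be a ring with a decreasing filtration `Fil` (indexed by `ℤ`, with
`Fil r = A` for `r ≤ 0`) and `t ∈ Fil 1` a regular element shifting the filtration strictly: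
`Fil (r+1) ∩ tA = t·Fil r`.  On `B := A[1/t]` define
`Fil^r B := ∪_n t^{-n} Fil^{r+n} A`.  Then `Fil^• B` is a decreasing exhaustive filtration,
multiplication by `t` carries `Fil^r B` onto `Fil^{r+1} B`, and `Fil^r B ∩ A = Fil^r A`
for all `r ≥ 0`. -/
theorem stmt_17 (A : Type*) [CommRing A]
    (Fil : ℤ → Ideal A) (hFil0 : ∀ r : ℤ, r ≤ 0 → Fil r = ⊤)
    (hanti : ∀ r : ℤ, Fil (r + 1) ≤ Fil r)
    (t : A) (ht1 : t ∈ Fil 1)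
    (hreg : ∀ a b : A, t * a = t * b → a = b)
    (hshift : ∀ r : ℤ, ∀ a ∈ Fil r, t * a ∈ Fil (r + 1))
    (hstrict : ∀ r : ℤ, Fil (r + 1) ⊓ Ideal.span {t} = Ideal.span {t} * Fil r)
    (B : Type*) [CommRing B] [Algebra A B] [IsLocalization.Away t B]
    (FilB : ℤ → Set B)
    (hFilB : ∀ r : ℤ, FilB r = {x : B | ∃ n : ℕ, ∃ a : A,
      a ∈ Fil (r + n) ∧ algebraMap A B a = algebraMap A B t ^ n * x}) :
    (∀ r : ℤ, FilB (r + 1) ⊆ FilB r) ∧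
    (∀ x : B, ∃ r : ℤ, x ∈ FilB r) ∧
    (∀ r : ℤ, (fun x : B => algebraMap A B t * x) '' FilB r = FilB (r + 1)) ∧
    (∀ r : ℤ, 0 ≤ r → {a : A | algebraMap A B a ∈ FilB r} = ↑(Fil r)) :=
  stmt_17_general A Fil hFil0 hanti t hreg hstrict B FilB hFilB
end
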